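/- arXiv:2108.06870 — 2 statements merged into one kernel-verified Lean document; each statement's English description precedes it below -/
import Mathlib

section
/- Let n ≥ 2. For K ≥ 1 and ξ = (ξ', ξ_n) ∈ ℝ^{n−1} × ℝ with ξ_n > 0, define φ_K(ξ) := K^6 ( √(K^{−6}|ξ'|^2 + ξ_n^2) − ξ_n ) and E_K(ξ) := K^4 ( φ_K(ξ) − |ξ'|^2/(2ξ_n) ). Then E_K is smooth on {ξ_n > 0}, positively homogeneous of degree 1 (E_K(λξ) = λ E_K(ξ) for λ > 0), and for every N ∈ ℕ and every c > 0 there exists K₀ ≥ 1 such that for all K ≥ K₀, all multi-indices α with |α| ≤ N, and all ξ with |ξ − e_n| ≤ 1/10, one has |∂^α E_K(ξ)| ≤ c. (This is the claim, proved in Section 2, that the rescaled circular-cone phase belongs to the class Φ(R): the error term and all its derivatives up to any fixed order are arbitrarily small for K large.) -/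
open MeasureTheory Real RealInnerProductSpace

noncomputable section

/-- The last coordinate `ξ_n` of `ξ ∈ ℝ^n`. -/
def lastC (n : ℕ) (ξ : EuclideanSpace ℝ (Fin n)) : ℝ :=
  if h : 0 < n then ξ ⟨n - 1, Nat.sub_lt h Nat.one_pos⟩ else 0

/-- The unit vector `e_n = (0,…,0,1) ∈ ℝ^n`. -/
def eN (n : ℕ) : EuclideanSpace ℝ (Fin n) :=
  if h : 0 < n then EuclideanSpace.single ⟨n - 1, Nat.sub_lt h Nat.one_pos⟩ (1 : ℝ) else 0

/-- The rescaled circular-cone phase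
`φ_K(ξ) = K^6 (√(K^{-6}|ξ'|^2 + ξ_n^2) - ξ_n)`, using `|ξ'|^2 = ‖ξ‖^2 - ξ_n^2`. -/
def phiK (n : ℕ) (K : ℝ) (ξ : EuclideanSpace ℝ (Fin n)) : ℝ :=
  K ^ 6 * (Real.sqrt ((K ^ 6)⁻¹ * (‖ξ‖ ^ 2 - lastC n ξ ^ 2) + lastC n ξ ^ 2) - lastC n ξ)

/-- The error term `E_K(ξ) = K^4 (φ_K(ξ) - |ξ'|^2/(2ξ_n))`. -/
def EK (n : ℕ) (K : ℝ) (ξ : EuclideanSpace ℝ (Fin n)) : ℝ :=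
  K ^ 4 * (phiK n K ξ - (‖ξ‖ ^ 2 - lastC n ξ ^ 2) / (2 * lastC n ξ))

end

lemma lastC_eq (n : ℕ) (h : 0 < n) (ξ : EuclideanSpace ℝ (Fin n)) :
    lastC n ξ = ξ ⟨n - 1, Nat.sub_lt h Nat.one_pos⟩ := dif_pos h

lemma lastC_eN (n : ℕ) (h : 0 < n) : lastC n (eN n) = 1 := by
  rw [lastC_eq n h, eN, dif_pos h]
  simp [EuclideanSpace.single_apply]

lemma sq_lastC_le (n : ℕ) (h : 0 < n) (ξ : EuclideanSpace ℝ (Fin n)) :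
    lastC n ξ ^ 2 ≤ ‖ξ‖ ^ 2 := by
  rw [lastC_eq n h]
  have hn : ‖ξ‖ ^ 2 = ∑ i, ‖ξ i‖ ^ 2 := by
    rw [EuclideanSpace.norm_eq, Real.sq_sqrt (by positivity)]
  rw [hn]
  have := Finset.single_le_sum (f := fun i => ‖ξ i‖ ^ 2)
    (fun i _ => by positivity) (Finset.mem_univ ⟨n - 1, Nat.sub_lt h Nat.one_pos⟩)
  simpa [Real.norm_eq_abs, sq_abs] using this

lemma abs_lastC_le (n : ℕ) (h : 0 < n) (ξ : EuclideanSpace ℝ (Fin n)) :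
    |lastC n ξ| ≤ ‖ξ‖ := by
  rw [← Real.sqrt_sq_eq_abs, ← Real.sqrt_sq (norm_nonneg ξ)]
  exact Real.sqrt_le_sqrt (sq_lastC_le n h ξ)

lemma lastC_sub (n : ℕ) (h : 0 < n) (ξ η : EuclideanSpace ℝ (Fin n)) :
    lastC n (ξ - η) = lastC n ξ - lastC n η := by
  simp [lastC_eq n h]

lemma lastC_smul (n : ℕ) (h : 0 < n) (l : ℝ) (ξ : EuclideanSpace ℝ (Fin n)) :
    lastC n (l • ξ) = l * lastC n ξ := by
  simp [lastC_eq n h]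

lemma lastC_near (n : ℕ) (h : 0 < n) (ξ : EuclideanSpace ℝ (Fin n))
    (hξ : ‖ξ - eN n‖ ≤ 1/5) : 4/5 ≤ lastC n ξ := by
  have h1 : |lastC n ξ - 1| ≤ ‖ξ - eN n‖ := by
    rw [← lastC_eN n h, ← lastC_sub n h]
    exact abs_lastC_le n h _
  have := abs_le.1 (h1.trans hξ)
  linarith [this.1]

lemma lastC_contDiff (n : ℕ) (h : 0 < n) :
    ContDiff ℝ (⊤ : ℕ∞) (fun ξ : EuclideanSpace ℝ (Fin n) => lastC n ξ) := by
  have : (fun ξ : EuclideanSpace ℝ (Fin n) => lastC n ξ)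
      = fun ξ => (EuclideanSpace.proj (⟨n - 1, Nat.sub_lt h Nat.one_pos⟩ : Fin n) :
          EuclideanSpace ℝ (Fin n) →L[ℝ] ℝ) ξ := funext fun ξ => by
    rw [lastC_eq n h]; rfl
  rw [this]
  exact (EuclideanSpace.proj (⟨n - 1, Nat.sub_lt h Nat.one_pos⟩ : Fin n) :
    EuclideanSpace ℝ (Fin n) →L[ℝ] ℝ).contDiff

lemma keyAlg {K t r2 : ℝ} (hK : 0 < K) (ht : 0 < t) (hr2 : 0 ≤ r2) :
    K ^ 4 * (K ^ 6 * (Real.sqrt ((K ^ 6)⁻¹ * r2 + t ^ 2) - t) - r2 / (2 * t)) =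
      (K ^ 2)⁻¹ * ((-(r2 ^ 2)) / (2 * t * (Real.sqrt ((K ^ 6)⁻¹ * r2 + t ^ 2) + t) ^ 2)) := by
  set s := Real.sqrt ((K ^ 6)⁻¹ * r2 + t ^ 2) with hs
  have hK6 : (0:ℝ) < K ^ 6 := by positivity
  have hs2 : s ^ 2 = (K ^ 6)⁻¹ * r2 + t ^ 2 := Real.sq_sqrt (by positivity)
  have hts : t ≤ s := by
    rw [hs]
    calc t = Real.sqrt (t ^ 2) := (Real.sqrt_sq ht.le).symm
    _ ≤ _ := Real.sqrt_le_sqrt (by nlinarith [inv_pos.2 hK6])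
  have hst : (0:ℝ) < s + t := by linarith
  have hr2eq : r2 = K ^ 6 * (s ^ 2 - t ^ 2) := by
    rw [hs2]; field_simp; ring
  rw [hr2eq]
  field_simp
  ring

noncomputable section

def Gfun (n : ℕ) : (EuclideanSpace ℝ (Fin n) × ℝ) → ℝ := fun p =>
  (-((‖p.1‖ ^ 2 - lastC n p.1 ^ 2) ^ 2)) /
    (2 * lastC n p.1 *
      (Real.sqrt (p.2 * (‖p.1‖ ^ 2 - lastC n p.1 ^ 2) + lastC n p.1 ^ 2) + lastC n p.1) ^ 2)

def Uset (n : ℕ) : Set (EuclideanSpace ℝ (Fin n) × ℝ) :=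
  {p | 0 < lastC n p.1 ∧ 0 < p.2 * (‖p.1‖ ^ 2 - lastC n p.1 ^ 2) + lastC n p.1 ^ 2}

end

lemma Uset_open (n : ℕ) (h : 0 < n) : IsOpen (Uset n) := by
  have hc : Continuous (fun p : EuclideanSpace ℝ (Fin n) × ℝ => lastC n p.1) :=
    (lastC_contDiff n h).continuous.comp continuous_fst
  have hc2 : Continuous (fun p : EuclideanSpace ℝ (Fin n) × ℝ =>
      p.2 * (‖p.1‖ ^ 2 - lastC n p.1 ^ 2) + lastC n p.1 ^ 2) := by
    continuity
  exact (isOpen_lt continuous_const hc).inter (isOpen_lt continuous_const hc2)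

lemma Gfun_smooth (n : ℕ) (h : 0 < n) : ContDiffOn ℝ (⊤ : ℕ∞) (Gfun n) (Uset n) := by
  have hts : ContDiff ℝ (⊤ : ℕ∞) (fun p : EuclideanSpace ℝ (Fin n) × ℝ => lastC n p.1) :=
    (lastC_contDiff n h).comp contDiff_fst
  have hnsq : ContDiff ℝ (⊤ : ℕ∞) (fun p : EuclideanSpace ℝ (Fin n) × ℝ => ‖p.1‖ ^ 2) :=
    (contDiff_norm_sq ℝ).comp contDiff_fst
  have hr2 : ContDiff ℝ (⊤ : ℕ∞) (fun p : EuclideanSpace ℝ (Fin n) × ℝ =>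
      ‖p.1‖ ^ 2 - lastC n p.1 ^ 2) := hnsq.sub (hts.pow 2)
  have harg : ContDiff ℝ (⊤ : ℕ∞) (fun p : EuclideanSpace ℝ (Fin n) × ℝ =>
      p.2 * (‖p.1‖ ^ 2 - lastC n p.1 ^ 2) + lastC n p.1 ^ 2) :=
    (contDiff_snd.mul hr2).add (hts.pow 2)
  have hsqrt : ContDiffOn ℝ (⊤ : ℕ∞) (fun p : EuclideanSpace ℝ (Fin n) × ℝ =>
      Real.sqrt (p.2 * (‖p.1‖ ^ 2 - lastC n p.1 ^ 2) + lastC n p.1 ^ 2)) (Uset n) :=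
    harg.contDiffOn.sqrt (fun p hp => ne_of_gt hp.2)
  apply ContDiffOn.div ((hr2.pow 2).neg.contDiffOn)
  · exact (contDiffOn_const.mul hts.contDiffOn).mul ((hsqrt.add hts.contDiffOn).pow 2)
  · intro p hp
    have h1 : 0 < lastC n p.1 := hp.1
    have h2 : 0 < Real.sqrt (p.2 * (‖p.1‖ ^ 2 - lastC n p.1 ^ 2) + lastC n p.1 ^ 2) :=
      Real.sqrt_pos.2 hp.2
    positivity

lemma EKeq (n : ℕ) (h : 0 < n) {K : ℝ} (hK : 0 < K) {ξ : EuclideanSpace ℝ (Fin n)}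
    (hξ : 0 < lastC n ξ) : EK n K ξ = (K ^ 2)⁻¹ * Gfun n (ξ, (K ^ 6)⁻¹) :=
  keyAlg hK hξ (by have := sq_lastC_le n h ξ; linarith)

lemma inl_iteratedFDeriv_zero {E : Type*} [NormedAddCommGroup E] [NormedSpace ℝ E]
    (k : ℕ) (x : E) :
    iteratedFDeriv ℝ (k + 2) (⇑(ContinuousLinearMap.inl ℝ E ℝ)) x = 0 := by
  refine ContinuousMultilinearMap.ext fun m => ?_
  rw [iteratedFDeriv_succ_apply_right]
  have hfd : (fun y : E => fderiv ℝ (⇑(ContinuousLinearMap.inl ℝ E ℝ)) y)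
      = fun _ => ContinuousLinearMap.inl ℝ E ℝ :=
    funext fun y => (ContinuousLinearMap.inl ℝ E ℝ).fderiv
  rw [hfd, iteratedFDeriv_const_of_ne (Nat.succ_ne_zero k)]
  simp

lemma paramMap_deriv_bound {E : Type*} [NormedAddCommGroup E] [NormedSpace ℝ E]
    (ε : ℝ) (x : E) (i : ℕ) (hi : 1 ≤ i) :
    ‖iteratedFDeriv ℝ i (fun ζ : E => ((ζ, ε) : E × ℝ)) x‖ ≤ 1 ^ i := by
  have hdecomp : (fun ζ : E => ((ζ, ε) : E × ℝ))
      = ⇑(ContinuousLinearMap.inl ℝ E ℝ) + fun _ => ((0 : E), ε) := by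
    funext ζ; simp [Prod.ext_iff]
  rw [hdecomp, iteratedFDeriv_add_apply ((ContinuousLinearMap.inl ℝ E ℝ).contDiff.contDiffAt) contDiff_const.contDiffAt]
  have hconst : iteratedFDeriv ℝ i (fun _ : E => (((0 : E), ε) : E × ℝ)) x = 0 := by
    rw [iteratedFDeriv_const_of_ne (by omega)]; rfl
  rw [hconst, add_zero]
  match i, hi with
  | 1, _ =>
    simp only [pow_one]
    apply ContinuousMultilinearMap.opNorm_le_bound zero_le_one
    intro m
    rw [iteratedFDeriv_one_apply, (ContinuousLinearMap.inl ℝ E ℝ).fderiv]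
    simp [Prod.norm_def, Fin.prod_univ_one]
  | (k + 2), _ =>
    rw [inl_iteratedFDeriv_zero]
    simp [one_pow]

/-- The rescaled circular-cone error term `E_K` is smooth on `{ξ_n > 0}`, positively
homogeneous of degree one, and all its derivatives up to any fixed order are
arbitrarily small near `e_n` once `K` is large. -/
theorem circular_cone_phase_in_class (n : ℕ) (hn : 2 ≤ n) :
    (∀ K : ℝ, 1 ≤ K →
      ContDiffOn ℝ (⊤ : ℕ∞) (EK n K) {ξ : EuclideanSpace ℝ (Fin n) | 0 < lastC n ξ} ∧
      ∀ l : ℝ, 0 < l → ∀ ξ : EuclideanSpace ℝ (Fin n), 0 < lastC n ξ →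
        EK n K (l • ξ) = l * EK n K ξ) ∧
    ∀ (N : ℕ) (c : ℝ), 0 < c → ∃ K₀ : ℝ, 1 ≤ K₀ ∧
      ∀ K : ℝ, K₀ ≤ K → ∀ j : ℕ, j ≤ N → ∀ ξ : EuclideanSpace ℝ (Fin n),
        ‖ξ - eN n‖ ≤ 1 / 10 → ‖iteratedFDeriv ℝ j (EK n K) ξ‖ ≤ c := by
  classical
  have h0 : 0 < n := by omega
  constructor
  · intro K hK
    have hKpos : (0:ℝ) < K := by linarith
    constructor
    · -- smoothness
      have hA : ContDiff ℝ (⊤ : ℕ∞) (fun ξ : EuclideanSpace ℝ (Fin n) =>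
          ((ξ, (K ^ 6)⁻¹) : EuclideanSpace ℝ (Fin n) × ℝ)) := contDiff_id.prodMk contDiff_const
      have hmaps : ∀ ξ ∈ {ξ : EuclideanSpace ℝ (Fin n) | 0 < lastC n ξ},
          ((ξ, (K ^ 6)⁻¹) : EuclideanSpace ℝ (Fin n) × ℝ) ∈ Uset n := by
        intro ξ hξ
        refine ⟨hξ, ?_⟩
        have hr2 : 0 ≤ ‖ξ‖ ^ 2 - lastC n ξ ^ 2 := by
          have := sq_lastC_le n h0 ξ; linarith
        have hi : (0:ℝ) ≤ (K ^ 6)⁻¹ := by positivity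
        have ht2 : 0 < lastC n ξ ^ 2 := pow_pos hξ 2
        exact add_pos_of_nonneg_of_pos (mul_nonneg hi hr2) ht2
      have hcomp : ContDiffOn ℝ (⊤ : ℕ∞) (fun ξ => Gfun n (ξ, (K ^ 6)⁻¹))
          {ξ : EuclideanSpace ℝ (Fin n) | 0 < lastC n ξ} :=
        (Gfun_smooth n h0).comp hA.contDiffOn (fun ξ hξ => hmaps ξ hξ)
      exact (contDiffOn_const.mul hcomp).congr (fun ξ hξ => EKeq n h0 hKpos hξ)
    · intro l hl ξ hξ
      have hsm : lastC n (l • ξ) = l * lastC n ξ := lastC_smul n h0 l ξ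
      have hnorm : ‖l • ξ‖ ^ 2 = l ^ 2 * ‖ξ‖ ^ 2 := by
        rw [norm_smul, mul_pow, Real.norm_eq_abs, sq_abs]
      have harg' : (K ^ 6)⁻¹ * (l ^ 2 * ‖ξ‖ ^ 2 - (l * lastC n ξ) ^ 2) + (l * lastC n ξ) ^ 2
          = l ^ 2 * ((K ^ 6)⁻¹ * (‖ξ‖ ^ 2 - lastC n ξ ^ 2) + lastC n ξ ^ 2) := by ring
      simp only [EK, phiK, hsm, hnorm, harg']
      rw [Real.sqrt_mul (sq_nonneg l), Real.sqrt_sq hl.le]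
      field_simp
  · intro N c hc
    set S : Set (EuclideanSpace ℝ (Fin n) × ℝ) :=
      (Metric.closedBall (eN n) (1/10)) ×ˢ (Set.Icc (0:ℝ) 1) with hSdef
    have hScomp : IsCompact S := (isCompact_closedBall _ _).prod isCompact_Icc
    have hSU : S ⊆ Uset n := by
      rintro ⟨ξ, ε⟩ ⟨hξ, hε⟩
      simp only [Metric.mem_closedBall, dist_eq_norm] at hξ
      have ht : 4/5 ≤ lastC n ξ := lastC_near n h0 ξ (by linarith)
      have hr2 : 0 ≤ ‖ξ‖ ^ 2 - lastC n ξ ^ 2 := by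
        have := sq_lastC_le n h0 ξ; linarith
      exact ⟨by linarith, add_pos_of_nonneg_of_pos (mul_nonneg hε.1 hr2) (by nlinarith)⟩
    have hbound : ∀ i : ℕ, ∃ Ci : ℝ, ∀ p ∈ S,
        ‖iteratedFDerivWithin ℝ i (Gfun n) (Uset n) p‖ ≤ Ci := by
      intro i
      have hcont : ContinuousOn (fun p => iteratedFDerivWithin ℝ i (Gfun n) (Uset n) p) (Uset n) :=
        (Gfun_smooth n h0).continuousOn_iteratedFDerivWithin (by exact_mod_cast le_top) (Uset_open n h0).uniqueDiffOn
      obtain ⟨Ci, hCi⟩ := hScomp.exists_bound_of_continuousOn (hcont.mono hSU)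
      exact ⟨Ci, fun p hp => hCi p hp⟩
    choose Cf hCf using hbound
    set C0 : ℝ := (Finset.range (N+1)).sup' ⟨0, by simp⟩ Cf with hC0def
    set Cm : ℝ := max C0 0 with hCmdef
    have hCm0 : 0 ≤ Cm := le_max_right _ _
    set B : ℝ := (N.factorial : ℝ) * Cm + 1 with hBdef
    have hB : 0 < B := by positivity
    refine ⟨max 1 (B / c), le_max_left _ _, ?_⟩
    intro K hK j hj ξ hξ
    have hK1 : (1:ℝ) ≤ K := le_trans (le_max_left _ _) hK
    have hKpos : (0:ℝ) < K := by linarith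
    set ε : ℝ := (K ^ 6)⁻¹ with hε
    have hεmem : ε ∈ Set.Icc (0:ℝ) 1 := by
      constructor
      · positivity
      · rw [hε]
        exact inv_le_one_of_one_le₀ (one_le_pow₀ hK1)
    set s : Set (EuclideanSpace ℝ (Fin n)) := Metric.ball (eN n) (1/5) with hsdef
    have hs_open : IsOpen s := Metric.isOpen_ball
    have hξs : ξ ∈ s := by
      simp only [hsdef, Metric.mem_ball, dist_eq_norm]
      linarith
    have htζ : ∀ ζ ∈ s, 0 < lastC n ζ := by
      intro ζ hζ
      simp only [hsdef, Metric.mem_ball, dist_eq_norm] at hζ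
      have := lastC_near n h0 ζ hζ.le
      linarith
    have hsU : ∀ ζ ∈ s, ((ζ, ε) : EuclideanSpace ℝ (Fin n) × ℝ) ∈ Uset n := by
      intro ζ hζ
      refine ⟨htζ ζ hζ, ?_⟩
      have hr2 : 0 ≤ ‖ζ‖ ^ 2 - lastC n ζ ^ 2 := by
        have := sq_lastC_le n h0 ζ; linarith
      exact add_pos_of_nonneg_of_pos (mul_nonneg hεmem.1 hr2) (pow_pos (htζ ζ hζ) 2)
    have hA : ContDiff ℝ (⊤ : ℕ∞) (fun ζ : EuclideanSpace ℝ (Fin n) =>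
        ((ζ, ε) : EuclideanSpace ℝ (Fin n) × ℝ)) := contDiff_id.prodMk contDiff_const
    have hGA : ContDiffOn ℝ (⊤ : ℕ∞) (fun ζ => Gfun n (ζ, ε)) s :=
      (Gfun_smooth n h0).comp hA.contDiffOn hsU
    rw [← iteratedFDerivWithin_of_isOpen j hs_open hξs]
    have hEq : Set.EqOn (EK n K) ((K ^ 2)⁻¹ • fun ζ => Gfun n (ζ, ε)) s := by
      intro ζ hζ
      have h1 := EKeq n h0 hKpos (htζ ζ hζ)
      rw [← hε] at h1
      simpa using h1
    rw [iteratedFDerivWithin_congr hEq hξs j]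
    rw [iteratedFDerivWithin_const_smul_apply ((hGA.of_le (by exact_mod_cast le_top)) ξ hξs) hs_open.uniqueDiffOn hξs]
    rw [norm_smul]
    have hmemS : ((ξ, ε) : EuclideanSpace ℝ (Fin n) × ℝ) ∈ S := by
      refine ⟨?_, hεmem⟩
      simp only [Metric.mem_closedBall, dist_eq_norm]
      exact hξ
    have hfaa : ‖iteratedFDerivWithin ℝ j
        ((Gfun n) ∘ fun ζ : EuclideanSpace ℝ (Fin n) => ((ζ, ε) : EuclideanSpace ℝ (Fin n) × ℝ))
        s ξ‖ ≤ (j.factorial : ℝ) * Cm * 1 ^ j := by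
      apply norm_iteratedFDerivWithin_comp_le (Gfun_smooth n h0) hA.contDiffOn (by exact_mod_cast le_top)
        (Uset_open n h0).uniqueDiffOn hs_open.uniqueDiffOn hsU hξs
      · intro i hij
        calc ‖iteratedFDerivWithin ℝ i (Gfun n) (Uset n) ((ξ, ε))‖
            ≤ Cf i := hCf i (ξ, ε) hmemS
          _ ≤ C0 := Finset.le_sup' Cf (Finset.mem_range.2 (by omega))
          _ ≤ Cm := le_max_left _ _
      · intro i hi _
        rw [iteratedFDerivWithin_of_isOpen i hs_open hξs]
        exact paramMap_deriv_bound ε ξ i hi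
    have hX : (j.factorial : ℝ) * Cm * 1 ^ j ≤ B := by
      have h1 : (j.factorial : ℝ) ≤ (N.factorial : ℝ) := Nat.cast_le.2 (Nat.factorial_le hj)
      rw [hBdef]
      have h2 : (j.factorial : ℝ) * Cm ≤ (N.factorial : ℝ) * Cm :=
        mul_le_mul_of_nonneg_right h1 hCm0
      simpa using by linarith
    have hfinal : (K ^ 2)⁻¹ * B ≤ c := by
      have h1 : B / c ≤ K := le_trans (le_max_right _ _) hK
      have h2 : B ≤ c * K := by
        rw [div_le_iff₀ hc] at h1; linarith
      have h3 : c * K ≤ c * K ^ 2 := by nlinarith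
      rw [inv_mul_le_iff₀ (by positivity : (0:ℝ) < K ^ 2)]
      linarith
    calc ‖(K ^ 2)⁻¹‖ * ‖iteratedFDerivWithin ℝ j
          ((Gfun n) ∘ fun ζ : EuclideanSpace ℝ (Fin n) =>
            ((ζ, ε) : EuclideanSpace ℝ (Fin n) × ℝ)) s ξ‖
        ≤ (K ^ 2)⁻¹ * B := by
          rw [Real.norm_eq_abs, abs_of_nonneg (by positivity)]
          exact mul_le_mul_of_nonneg_left (hfaa.trans hX) (by positivity)
      _ ≤ c := hfinal
end

section
/- Let n ≥ 2 and 1 ≤ m ≤ n. There exists a constant C > 0, depending only on n, such that the following holds for every K ≥ C. Let α_i ∈ ℝ^n and a_{i,n+1} ∈ ℝ for i = 1,…,n+1−m, and let V̄ and V⁻ be as in the context. Suppose η ∈ S^{n−1} satisfies (η,1) ∈ V̄ and Ang(η, v) > π/2 − K^{−2} for every nonzero v ∈ V⁻. Then every point (ξ, |ξ|) of the truncated cone C = {(ξ,|ξ|) : 1/2 ≤ |ξ| ≤ 1} lying in V̄ satisfies Ang(ξ, η) ≤ C K^{−2}. (Lemma 4.1: tangential intersection of a subspace with the circular cone.) 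-/
open MeasureTheory Real RealInnerProductSpace

noncomputable section

/-- The angle between two vectors of a real inner product space. -/
def ang {E : Type*} [NormedAddCommGroup E] [InnerProductSpace ℝ E] (v w : E) : ℝ :=
  Real.arccos (⟪v, w⟫ / (‖v‖ * ‖w‖))

end

lemma ang_eq_angle {E : Type*} [NormedAddCommGroup E] [InnerProductSpace ℝ E] (v w : E) :
    ang v w = InnerProductGeometry.angle v w := rfl

/-- Lemma 4.1: if the subspace `V̄` meets the truncated light cone tangentially at a
direction `η` nearly orthogonal to `V⁻`, then `C ∩ V̄` is contained in an angular
`K^{-2}`-neighborhood of `η`. -/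
theorem cone_tangential_intersection (n m : ℕ) (hn : 2 ≤ n) (hm1 : 1 ≤ m) (hm2 : m ≤ n) :
    ∃ C : ℝ, 0 < C ∧ ∀ K : ℝ, C ≤ K →
      ∀ (α : Fin (n + 1 - m) → EuclideanSpace ℝ (Fin n)) (a : Fin (n + 1 - m) → ℝ)
        (η : EuclideanSpace ℝ (Fin n)),
        ‖η‖ = 1 →
        (∀ i, ⟪α i, η⟫ = a i) →
        (∀ v : EuclideanSpace ℝ (Fin n), v ≠ 0 → (∀ i, ⟪α i, v⟫ = 0) →
          Real.pi / 2 - (K ^ 2)⁻¹ < ang η v) →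
        ∀ ξ : EuclideanSpace ℝ (Fin n), 1 / 2 ≤ ‖ξ‖ → ‖ξ‖ ≤ 1 →
          (∀ i, ⟪α i, ξ⟫ = a i * ‖ξ‖) →
          ang ξ η ≤ C * (K ^ 2)⁻¹ := by
  refine ⟨π, Real.pi_pos, ?_⟩
  intro K hK α a η hη hαη hang ξ hξ1 hξ2 hαξ
  have hKpos : 0 < K := lt_of_lt_of_le Real.pi_pos hK
  have hπ3 : (3:ℝ) < π := by
    have := Real.pi_gt_d6; linarith
  have hK3 : (3:ℝ) < K := lt_of_lt_of_le hπ3 hK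
  set ε : ℝ := (K ^ 2)⁻¹ with hεdef
  have hεpos : 0 < ε := by positivity
  have hεlt : ε < 1 := by
    rw [hεdef]
    rw [inv_lt_one_iff₀]
    right; nlinarith
  clear_value ε
  have hξpos : (0:ℝ) < ‖ξ‖ := by linarith
  have hη0 : η ≠ 0 := by
    intro h; rw [h, norm_zero] at hη; norm_num at hη
  set v : EuclideanSpace ℝ (Fin n) := ξ - ‖ξ‖ • η with hvdef
  clear_value v
  by_cases hv0 : v = 0
  · have hξη : ξ = ‖ξ‖ • η := by
      have h := hvdef.symm.trans hv0
      exact (sub_eq_zero.mp h)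
    rw [hξη, ang_eq_angle, InnerProductGeometry.angle_smul_left_of_pos _ _ hξpos,
      InnerProductGeometry.angle_self hη0]
    positivity
  · have hvnorm : (0:ℝ) < ‖v‖ := norm_pos_iff.mpr hv0
    obtain ⟨t, htdef⟩ : ∃ t : ℝ, ⟪η, ξ⟫ = t := ⟨_, rfl⟩
    have htle : t ≤ ‖ξ‖ := by
      rw [← htdef]
      calc ⟪η, ξ⟫ ≤ ‖η‖ * ‖ξ‖ := real_inner_le_norm _ _
        _ = ‖ξ‖ := by rw [hη, one_mul]
    have hinnerηv : ⟪η, (-v : EuclideanSpace ℝ (Fin n))⟫ = ‖ξ‖ - t := by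
      rw [inner_neg_right, hvdef, inner_sub_right, real_inner_smul_right,
        real_inner_self_eq_norm_sq, hη, htdef]
      ring
    have hvsq : ‖v‖ ^ 2 = 2 * ‖ξ‖ * (‖ξ‖ - t) := by
      rw [← real_inner_self_eq_norm_sq, hvdef, real_inner_sub_sub_self,
        real_inner_smul_right, real_inner_smul_left, real_inner_smul_right,
        real_inner_self_eq_norm_sq ξ, real_inner_self_eq_norm_sq η, hη,
        show (⟪ξ, η⟫ : ℝ) = t from by rw [← htdef]; exact real_inner_comm η ξ]
      ring
    have hαv : ∀ i, ⟪α i, (-v : EuclideanSpace ℝ (Fin n))⟫ = 0 := by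
      intro i
      rw [inner_neg_right, hvdef, inner_sub_right, real_inner_smul_right, hαη i, hαξ i]
      ring
    have hangv := hang (-v) (neg_ne_zero.mpr hv0) hαv
    have hcos : Real.cos (ang η (-v)) < Real.sin ε := by
      rw [← Real.cos_pi_div_two_sub]
      have h1 : π / 2 - ε ∈ Set.Icc 0 π := by
        constructor <;> nlinarith
      have h2 : ang η (-v) ∈ Set.Icc 0 π := by
        rw [ang_eq_angle]
        exact ⟨InnerProductGeometry.angle_nonneg _ _, InnerProductGeometry.angle_le_pi _ _⟩
      exact Real.strictAntiOn_cos h1 h2 hangv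
    have hcos' : Real.cos (ang η (-v)) = (‖ξ‖ - t) / ‖v‖ := by
      rw [ang_eq_angle, InnerProductGeometry.cos_angle, hinnerηv, hη, norm_neg, one_mul]
    have hsinε : Real.sin ε ≤ ε := Real.sin_le hεpos.le
    have hkey : ‖ξ‖ - t < ε * ‖v‖ := by
      have h := hcos'.symm.trans_lt (hcos.trans_le hsinε)
      rwa [div_lt_iff₀ hvnorm] at h
    clear hcos hcos' hinnerηv hangv hαv hang hαη hαξ hsinε α a hvdef
    have hvlt : ‖v‖ < 2 * ‖ξ‖ * ε := by
      nlinarith [hvsq, hkey, hvnorm]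
    have htclose : ‖ξ‖ - t < 2 * ‖ξ‖ * ε ^ 2 := by
      nlinarith [hvsq, hvlt, hvnorm, hεpos]
    have hcosξη : Real.cos (ang ξ η) = t / ‖ξ‖ := by
      rw [ang_eq_angle, InnerProductGeometry.cos_angle, real_inner_comm, htdef, hη, mul_one]
    have hcosge : 1 - 2 * ε ^ 2 < Real.cos (ang ξ η) := by
      rw [hcosξη, lt_div_iff₀ hξpos]
      nlinarith [htclose]
    obtain ⟨θ, hθ⟩ : ∃ θ : ℝ, ang ξ η = θ := ⟨_, rfl⟩
    rw [hθ] at hcosge ⊢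
    have hθmem : θ ∈ Set.Icc 0 π := by
      rw [← hθ, ang_eq_angle]
      exact ⟨InnerProductGeometry.angle_nonneg _ _, InnerProductGeometry.angle_le_pi _ _⟩
    clear hθ hcosξη htdef hvsq hkey hvlt htclose hεdef hη hη0 hvnorm hv0 htle hξ1 hξ2 hξpos v ξ η
    have hjordan : Real.cos θ ≤ 1 - 2 / π ^ 2 * θ ^ 2 := by
      apply Real.cos_le_one_sub_mul_cos_sq
      rw [abs_of_nonneg hθmem.1]
      exact hθmem.2
    have hπpos := Real.pi_pos
    have hθsq : θ ^ 2 < π ^ 2 * ε ^ 2 := by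
      have h2 : 2 / π ^ 2 * θ ^ 2 < 2 * ε ^ 2 := by linarith
      rw [div_mul_eq_mul_div 2 (π ^ 2) (θ ^ 2), div_lt_iff₀ (by positivity)] at h2
      nlinarith
    nlinarith [hθmem.1, hεpos, hθsq, mul_pos hπpos hεpos]
end
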